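/- Let F : Set(A) → ℝ be normalized (F(∅)=0), monotone, with submodularity ratio γ ∈ (0,1]. Let S_k be the output of k steps of greedy marginal-gain maximization starting from ∅, and S* an optimizer of F over subsets of size at most k. Then F(S_k) ≥ (1 − e^{−γ})·F(S*). -/

import Mathlib

/-!
Let `T` be any set of size at most `k`. At a greedy step from `S`, weak submodularity and
monotonicity give `γ (F T - F S) ≤ ∑_{b ∈ T \ S} marginalGain F S b ≤ k · marginalGain F S a`
for the greedy choice `a`, so the gap `F T - F S` shrinks by the factor `1 - γ / k` at each
step. After `k` steps from `F ∅ = 0` the gap is at most `(1 - γ / k)^k F T ≤ e^{-γ} F T`.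
-/

open Finset

section

variable {α : Type*} [DecidableEq α] (F : Finset α → ℝ)

def marginalGain (S : Finset α) (a : α) : ℝ := F (insert a S) - F S

/-- `γ` is a lower bound for the submodularity ratio of `F`. -/
def IsWeaklySubmodular (γ : ℝ) : Prop :=
  ∀ S L : Finset α, Disjoint L S → ∑ a ∈ L, marginalGain F S a ≥ γ * (F (S ∪ L) - F S)

variable {F}

theorem marginalGain_nonneg (hmono : Monotone F) (S : Finset α) (a : α) :
    0 ≤ marginalGain F S a :=
  sub_nonneg.2 (hmono (subset_insert a S))

theorem IsWeaklySubmodular.mul_sub_le_sum_marginalGain {γ : ℝ} (hF : IsWeaklySubmodular F γ)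
    (hγ : 0 ≤ γ) (hmono : Monotone F) (S T : Finset α) :
    γ * (F T - F S) ≤ ∑ b ∈ T \ S, marginalGain F S b := by
  have hT : F T ≤ F (S ∪ T \ S) := hmono <| by
    rw [union_sdiff_self_eq_union]; exact subset_union_right
  calc γ * (F T - F S) ≤ γ * (F (S ∪ T \ S) - F S) := by gcongr
    _ ≤ ∑ b ∈ T \ S, marginalGain F S b := hF S (T \ S) sdiff_disjoint

theorem IsWeaklySubmodular.sub_insert_le_of_greedy {γ : ℝ} (hF : IsWeaklySubmodular F γ)
    (hγ : 0 ≤ γ) (hmono : Monotone F) {k : ℕ} (hk : 0 < k) {S T : Finset α} (hT : #T ≤ k)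
    {a : α} (hgreedy : ∀ b ∉ S, marginalGain F S b ≤ marginalGain F S a) :
    F T - F (insert a S) ≤ (1 - γ / k) * (F T - F S) := by
  have hk' : (0 : ℝ) < k := by exact_mod_cast hk
  have hcard : (#(T \ S) : ℝ) ≤ k := by exact_mod_cast (card_le_card sdiff_subset).trans hT
  have hgain : γ * (F T - F S) ≤ k * marginalGain F S a :=
    calc γ * (F T - F S) ≤ ∑ b ∈ T \ S, marginalGain F S b :=
          hF.mul_sub_le_sum_marginalGain hγ hmono S T
      _ ≤ #(T \ S) • marginalGain F S a :=
          sum_le_card_nsmul _ _ _ fun b hb => hgreedy b (mem_sdiff.1 hb).2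
      _ ≤ k * marginalGain F S a := by
          rw [nsmul_eq_mul]
          exact mul_le_mul_of_nonneg_right hcard (marginalGain_nonneg hmono S a)
  have hfrac : γ * (F T - F S) / k ≤ marginalGain F S a := by rwa [div_le_iff₀' hk']
  rw [marginalGain] at hfrac
  linarith [show (1 - γ / k) * (F T - F S) = F T - F S - γ * (F T - F S) / k by ring]

end

theorem greedy_guarantee_weak_submodularity_general
    {α : Type*} [DecidableEq α]
    (F : Finset α → ℝ) (hnorm : F ∅ = 0)
    (hmono : ∀ S T : Finset α, S ⊆ T → F S ≤ F T)
    (γ : ℝ) (hγ0 : 0 < γ) (hγ1 : γ ≤ 1)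
    (hsub : ∀ S L : Finset α, Disjoint L S →
      ∑ a ∈ L, (F (insert a S) - F S) ≥ γ * (F (S ∪ L) - F S))
    (k : ℕ) (hk : 1 ≤ k)
    (Sstar : Finset α) (hScard : Sstar.card ≤ k)
    (S : ℕ → Finset α) (a : ℕ → α)
    (hS0 : S 0 = ∅)
    (hstep : ∀ t, t < k → S (t + 1) = insert (a t) (S t))
    (hgreedy : ∀ t, t < k → ∀ b : α, b ∉ S t →
      F (insert b (S t)) - F (S t) ≤ F (insert (a t) (S t)) - F (S t)) :
    F (S k) ≥ (1 - Real.exp (-γ)) * F Sstar := by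
  have hmono' : Monotone F := fun S T h => hmono S T h
  have hsub' : IsWeaklySubmodular F γ := hsub
  have hγk : γ ≤ k := hγ1.trans (by exact_mod_cast hk)
  have hfactor : 0 ≤ 1 - γ / k := by
    rw [sub_nonneg, div_le_one (by positivity)]
    exact hγk
  have hgap : F Sstar - F (S k) ≤ (1 - γ / k) ^ k * F Sstar := by
    simpa [hS0, hnorm] using le_geom (u := fun t => F Sstar - F (S t)) hfactor k fun t ht => by
      simpa only [hstep t ht] using
        hsub'.sub_insert_le_of_greedy hγ0.le hmono' hk hScard (hgreedy t ht)
  have hFstar : 0 ≤ F Sstar := hnorm ▸ hmono ∅ Sstar (empty_subset _)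
  have hexp := mul_le_mul_of_nonneg_right (Real.one_sub_div_pow_le_exp_neg hγk) hFstar
  linarith

theorem greedy_guarantee_weak_submodularity
    {α : Type*} [Fintype α] [DecidableEq α]
    (F : Finset α → ℝ) (hnorm : F ∅ = 0)
    (hmono : ∀ S T : Finset α, S ⊆ T → F S ≤ F T)
    (γ : ℝ) (hγ0 : 0 < γ) (hγ1 : γ ≤ 1)
    (hsub : ∀ S L : Finset α, Disjoint L S →
      ∑ a ∈ L, (F (insert a S) - F S) ≥ γ * (F (S ∪ L) - F S))
    (k : ℕ) (hk : 1 ≤ k)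
    (Sstar : Finset α) (hScard : Sstar.card ≤ k)
    (hSopt : ∀ T : Finset α, T.card ≤ k → F T ≤ F Sstar)
    (S : ℕ → Finset α) (a : ℕ → α)
    (hS0 : S 0 = ∅)
    (hstep : ∀ t, t < k → S (t + 1) = insert (a t) (S t))
    (hnotmem : ∀ t, t < k → a t ∉ S t)
    (hgreedy : ∀ t, t < k → ∀ b : α, b ∉ S t →
      F (insert b (S t)) - F (S t) ≤ F (insert (a t) (S t)) - F (S t)) :
    F (S k) ≥ (1 - Real.exp (-γ)) * F Sstar :=
  greedy_guarantee_weak_submodularity_general F hnorm hmono γ hγ0 hγ1 hsub k hk Sstar hScard S a hS0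
    hstep hgreedy
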